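/- arXiv:2308.14867 — 6 statements merged into one kernel-verified Lean document; each statement's English description precedes it below -/
import Mathlib

section
/- Let a_1, a_2, a_3 be automorphisms of the infinite binary rooted tree defined recursively by a_1 = (id, a_3), a_2 = (id, a_1)σ, a_3 = (a_2, id)σ, where σ swaps the two subtrees at the first level. Then a_1 a_2 a_3 = id. -/
namespace TreeAut

/-- An automorphism of the infinite rooted binary tree, encoded by its portrait:
at each vertex (a finite word over `Bool`), whether the two subtrees are swapped. -/
def Port : Type := List Bool → Bool

/-- Auxiliary: the action of a tree automorphism on vertices (structural in the vertex). -/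
def actAux : List Bool → Port → List Bool
  | [], _ => []
  | b :: l, p => (xor b (p [])) :: actAux l (fun s => p (b :: s))

/-- The action of a tree automorphism on the vertices of the tree. -/
def act (p : Port) (l : List Bool) : List Bool := actAux l p

/-- Regard a function on vertices as a portrait. -/
def ofFun (f : List Bool → Bool) : Port := f

instance : One Port := ⟨fun _ => false⟩
instance : Mul Port := ⟨fun p q => ofFun fun s => xor (p s) (q (act p s))⟩

lemma one_apply (s : List Bool) : (1 : Port) s = false := rfl
lemma mul_apply (p q : Port) (s : List Bool) : (p * q) s = xor (p s) (q (act p s)) := rfl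

/-- The left subtree portrait of `p` under branch `b`. -/
def sub (p : Port) (b : Bool) : Port := ofFun fun s => p (b :: s)

lemma act_nil (p : Port) : act p [] = [] := rfl
lemma act_cons (p : Port) (b : Bool) (l : List Bool) :
    act p (b :: l) = (xor b (p [])) :: act (sub p b) l := rfl

lemma act_one : ∀ l, act (1 : Port) l = l
  | [] => rfl
  | b :: l => by
      show (xor b false) :: act (sub 1 b) l = b :: l
      have : sub 1 b = (1 : Port) := rfl
      rw [Bool.xor_false, this, act_one l]

lemma sub_mul (p q : Port) (b : Bool) : sub (p * q) b = sub p b * sub q (xor b (p [])) := rfl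

lemma act_mul : ∀ (l : List Bool) (p q : Port), act (p * q) l = act q (act p l)
  | [], _, _ => rfl
  | b :: l, p, q => by
      rw [act_cons, act_cons, act_cons, sub_mul, act_mul l]
      show (xor b (xor (p []) (q []))) :: _ = (xor (xor b (p [])) (q [])) :: _
      rw [Bool.xor_assoc]

/-- Auxiliary: the inverse action (structural in the vertex). -/
def invActAux : List Bool → Port → List Bool
  | [], _ => []
  | b :: l, p => (xor b (p [])) :: invActAux l (fun s => p ((xor b (p [])) :: s))

/-- The inverse of the action of a tree automorphism. -/
def invAct (p : Port) (l : List Bool) : List Bool := invActAux l p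

instance : Inv Port := ⟨fun p => ofFun fun s => p (invAct p s)⟩

lemma inv_apply (p : Port) (s : List Bool) : (p⁻¹ : Port) s = p (invAct p s) := rfl

lemma invAct_cons (p : Port) (b : Bool) (l : List Bool) :
    invAct p (b :: l) = (xor b (p [])) :: invAct (sub p (xor b (p []))) l := rfl

lemma invAct_act : ∀ (l : List Bool) (p : Port), invAct p (act p l) = l
  | [], _ => rfl
  | b :: l, p => by
      rw [act_cons, invAct_cons]
      have hb : xor (xor b (p [])) (p []) = b := by
        rw [Bool.xor_assoc, Bool.xor_self, Bool.xor_false]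
      rw [hb]
      exact congrArg _ (invAct_act l _)

lemma sub_inv (p : Port) (b : Bool) : sub (p⁻¹ : Port) b = (sub p (xor b (p [])))⁻¹ := by
  funext s
  show p (invAct p (b :: s)) = sub p (xor b (p [])) (invAct (sub p (xor b (p []))) s)
  rw [invAct_cons]
  rfl

lemma act_inv : ∀ (l : List Bool) (p : Port), act (p⁻¹ : Port) l = invAct p l
  | [], _ => rfl
  | b :: l, p => by
      rw [act_cons, sub_inv, act_inv l]
      have : (p⁻¹ : Port) [] = p [] := rfl
      rw [this, invAct_cons]

instance : Group Port :=
  Group.ofLeftAxioms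
    (fun p q r => by
      funext s
      show xor (xor (p s) (q (act p s))) (r (act (p * q) s))
          = xor (p s) (xor (q (act p s)) (r (act q (act p s))))
      rw [act_mul, Bool.xor_assoc])
    (fun p => by
      funext s
      show xor false (p (act 1 s)) = p s
      rw [Bool.false_xor, act_one])
    (fun p => by
      funext s
      show xor ((p⁻¹ : Port) s) (p (act (p⁻¹ : Port) s)) = false
      rw [act_inv, inv_apply, Bool.xor_self])

/-- The element `(u,v)τ` of `Aut(T) = (Aut(T) × Aut(T)) ⋊ S₂`: the automorphism acting
as `u` on the left subtree, as `v` on the right subtree, and by `τ` on the first level. -/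
def mk (u v : Port) (τ : Bool) : Port := fun s =>
  match s with
  | [] => τ
  | b :: t => if b then v t else u t

/-- `σ`, the automorphism swapping the two first-level subtrees. -/
def sigma : Port := mk 1 1 true

/-- Auxiliary structural recursion giving the portraits of the three generators. -/
def aT : List Bool → Bool × Bool × Bool
  | [] => (false, true, true)
  | b :: s => (if b then (aT s).2.2 else false,
               if b then (aT s).1 else false,
               if b then false else (aT s).2.1)

/-- The generator `a₁ = (id, a₃)`. -/
def a1 : Port := fun s => (aT s).1
/-- The generator `a₂ = (id, a₁)σ`. -/
def a2 : Port := fun s => (aT s).2.1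
/-- The generator `a₃ = (a₂, id)σ`. -/
def a3 : Port := fun s => (aT s).2.2

lemma a1_eq : a1 = mk 1 a3 false := by
  funext s
  cases s with
  | nil => rfl
  | cons b t => cases b <;> rfl

lemma a2_eq : a2 = mk 1 a1 true := by
  funext s
  cases s with
  | nil => rfl
  | cons b t => cases b <;> rfl

lemma a3_eq : a3 = mk a2 1 true := by
  funext s
  cases s with
  | nil => rfl
  | cons b t => cases b <;> rfl

lemma act_length : ∀ (l : List Bool) (p : Port), (act p l).length = l.length
  | [], _ => rfl
  | _ :: l, p => congrArg Nat.succ (act_length l _)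

lemma invAct_length : ∀ (l : List Bool) (p : Port), (invAct p l).length = l.length
  | [], _ => rfl
  | _ :: l, p => congrArg Nat.succ (invAct_length l _)

/-- The subgroup of `Aut(T)` of automorphisms acting trivially below level `n`;
it is (canonically isomorphic to) `W_n = Aut(T_n)`. -/
def W (n : ℕ) : Subgroup Port where
  carrier := {p | ∀ s : List Bool, n ≤ s.length → p s = false}
  one_mem' := fun _ _ => rfl
  mul_mem' := by
    intro p q hp hq s hs
    show xor (p s) (q (act p s)) = false
    rw [hp s hs, hq _ (by rw [act_length]; exact hs), Bool.xor_self]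
  inv_mem' := by
    intro p hp s hs
    show p (invAct p s) = false
    exact hp _ (by rw [invAct_length]; exact hs)

/-- Restriction ("truncation") of a tree automorphism to the first `n` levels. -/
def trunc (n : ℕ) (p : Port) : Port := fun s => if s.length < n then p s else false

lemma trunc_mem_W (n : ℕ) (p : Port) : trunc n p ∈ W n := by
  intro s hs
  simp only [trunc, if_neg (Nat.not_lt.mpr hs)]


lemma mk_mul (u v u' v' : Port) (τ τ' : Bool) :
    mk u v τ * mk u' v' τ' =
      mk (u * (if τ then v' else u')) (v * (if τ then u' else v')) (xor τ τ') := by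
  funext s
  cases s with
  | nil => cases τ <;> rfl
  | cons b t => cases b <;> cases τ <;> rfl

/-- If `a₁, a₂, a₃` are automorphisms of the infinite binary rooted tree
satisfying the recursive definitions `a₁ = (id, a₃)`, `a₂ = (id, a₁)σ`, `a₃ = (a₂, id)σ`,
then `a₁ a₂ a₃ = id`. -/
theorem product_of_generators_eq_one (b1 b2 b3 : Port)
    (h1 : b1 = mk 1 b3 false) (h2 : b2 = mk 1 b1 true) (h3 : b3 = mk b2 1 true) :
    b1 * b2 * b3 = 1 := by
  have hx : b1 * b2 * b3 = mk 1 (b3 * b1 * b2) false := by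
    conv_lhs => rw [h1, h2, h3]
    rw [mk_mul, mk_mul]; simp [mul_assoc, ← h3]
  have hy : b3 * b1 * b2 = mk (b2 * b3 * b1) 1 false := by
    conv_lhs => rw [h1, h2, h3]
    rw [mk_mul, mk_mul]; simp [mul_assoc, ← h3]
  have hz : b2 * b3 * b1 = mk 1 (b1 * b2 * b3) false := by
    conv_lhs => rw [h1, h2, h3]
    rw [mk_mul, mk_mul]; simp [mul_assoc, ← h3]
  have key : ∀ s : List Bool,
      (b1 * b2 * b3) s = false ∧ (b3 * b1 * b2) s = false ∧ (b2 * b3 * b1) s = false := by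
    intro s
    induction s with
    | nil => rw [hx, hy, hz]; exact ⟨rfl, rfl, rfl⟩
    | cons b t ih =>
      refine ⟨?_, ?_, ?_⟩
      · rw [hx]; cases b
        · rfl
        · exact ih.2.1
      · rw [hy]; cases b
        · exact ih.2.2
        · rfl
      · rw [hz]; cases b
        · rfl
        · exact ih.1
  funext s
  exact (key s).1

end TreeAut
end

section
/- Let f(x) = 1/(x-1)^2, α ≠ 0,1 a point, α_1 = 1 + 1/√α a preimage of α, and α_{11}, α_{21} the preimages (with choice of sign +) of α_1 and α_2 = 1 - 1/√α respectively. Then α - 1 = [1/((α_1 - 1)(α_{11} - 1)(α_{21} - 1))]^2. -/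
/-- Let `f(x) = 1/(x-1)²` over an algebraically closed field of
characteristic zero and `α ≠ 0, 1`. With `α₁ = 1 + 1/√α`, `α₂ = 1 - 1/√α` the preimages
of `α`, and `α₁₁ = 1 + 1/√α₁`, `α₂₁ = 1 + 1/√α₂` the `+`-preimages of `α₁` and `α₂`,
we have `α - 1 = (1/((α₁-1)(α₁₁-1)(α₂₁-1)))²`. -/
theorem alpha_sub_one_is_square (F : Type*) [Field F] [IsAlgClosed F] [CharZero F]
    (α sα s₁ s₂ α₁ α₂ α₁₁ α₂₁ : F)
    (hα0 : α ≠ 0) (hα1 : α ≠ 1)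
    (hsα : sα ^ 2 = α)
    (hα₁ : α₁ = 1 + 1 / sα) (hα₂ : α₂ = 1 - 1 / sα)
    (hs₁ : s₁ ^ 2 = α₁) (hs₂ : s₂ ^ 2 = α₂)
    (hs₁0 : s₁ ≠ 0) (hs₂0 : s₂ ≠ 0)
    (hα₁₁ : α₁₁ = 1 + 1 / s₁) (hα₂₁ : α₂₁ = 1 + 1 / s₂) :
    α - 1 = (1 / ((α₁ - 1) * (α₁₁ - 1) * (α₂₁ - 1))) ^ 2 := by
  have hsα0 : sα ≠ 0 := by
    intro h; apply hα0; rw [← hsα, h]; ring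
  subst hα₁ hα₂ hα₁₁ hα₂₁
  field_simp at hs₁ hs₂ ⊢
  linear_combination (-(s₂^2*sα))*hs₁ + (-(sα+1))*hs₂ + (-1)*hsα
end

section
/- Let f(x) = 1/(x-1)^2 with iterates f^n = g_n/h_n where g_1 = 1, h_1 = (x-1)^2, g_n = h_{n-1}^2, h_n = (g_{n-1} - h_{n-1})^2. Then for all n ≥ 1: deg g_n < deg h_n if n ≡ 1 (mod 3), deg g_n = deg h_n if n ≡ 2 (mod 3), and deg g_n > deg h_n if n ≡ 0 (mod 3). -/
open Polynomial

/-- The numerators and denominators of the iterates of `f(x) = 1/(x-1)²`: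
`gh n = (gₙ, hₙ)` with `g₁ = 1`, `h₁ = (x-1)²`, `gₙ = hₙ₋₁²`, `hₙ = (gₙ₋₁ - hₙ₋₁)²`. -/
noncomputable def gh : ℕ → Polynomial ℚ × Polynomial ℚ
  | 0 => (1, 1)
  | 1 => (1, (X - 1) ^ 2)
  | n + 2 => ((gh (n + 1)).2 ^ 2, ((gh (n + 1)).1 - (gh (n + 1)).2) ^ 2)

/-- `gₙ`, the numerator of `fⁿ`. -/
noncomputable def g (n : ℕ) : Polynomial ℚ := (gh n).1

/-- `hₙ`, the denominator of `fⁿ`. -/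
noncomputable def h (n : ℕ) : Polynomial ℚ := (gh n).2

lemma g_succ (n : ℕ) : g (n + 2) = h (n + 1) ^ 2 := by
  simp [g, h, gh]

lemma h_succ (n : ℕ) : h (n + 2) = (g (n + 1) - h (n + 1)) ^ 2 := by
  simp [g, h, gh]

lemma key (m : ℕ) (hg : g (m+1) ≠ 0) (hh : h (m+1) ≠ 0)
    (hlt : (g (m+1)).natDegree < (h (m+1)).natDegree) :
    (g (m+2) ≠ 0) ∧ (h (m+2) ≠ 0) ∧ (g (m+2)).natDegree = (h (m+2)).natDegree ∧
    (g (m+3) ≠ 0) ∧ (h (m+3) ≠ 0) ∧ (h (m+3)).natDegree < (g (m+3)).natDegree ∧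
    (g (m+4) ≠ 0) ∧ (h (m+4) ≠ 0) ∧ (g (m+4)).natDegree < (h (m+4)).natDegree := by
  set a := (g (m+1)).natDegree with ha
  set b := (h (m+1)).natDegree with hb
  have hsub1 : g (m+1) - h (m+1) ≠ 0 := by
    intro hz
    rw [sub_eq_zero] at hz
    have := congrArg natDegree hz
    omega
  have hd1 : (g (m+1) - h (m+1)).natDegree = b := natDegree_sub_eq_right_of_natDegree_lt hlt
  have hg2 : g (m+2) ≠ 0 := by rw [g_succ]; exact pow_ne_zero _ hh
  have hh2 : h (m+2) ≠ 0 := by rw [h_succ]; exact pow_ne_zero _ hsub1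
  have hdg2 : (g (m+2)).natDegree = 2 * b := by rw [g_succ, natDegree_pow]
  have hdh2 : (h (m+2)).natDegree = 2 * b := by rw [h_succ, natDegree_pow, hd1]
  -- g (m+2) - h (m+2) = g (m+1) * (2 * h (m+1) - g (m+1))
  have hfac : g (m+2) - h (m+2) = g (m+1) * (2 * h (m+1) - g (m+1)) := by
    rw [g_succ, h_succ]; ring
  have h2h : (2 * h (m+1) : Polynomial ℚ).natDegree = b := by
    rw [show (2 : Polynomial ℚ) = C 2 from by rw [map_ofNat], natDegree_C_mul (by norm_num : (2:ℚ) ≠ 0)]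
  have hs2 : (2 * h (m+1) - g (m+1)).natDegree = b := by
    rw [natDegree_sub_eq_left_of_natDegree_lt (by rw [h2h]; exact hlt), h2h]
  have hs2ne : 2 * h (m+1) - g (m+1) ≠ 0 := by
    intro hz
    rw [sub_eq_zero] at hz
    have := congrArg natDegree hz
    rw [h2h] at this
    omega
  have hsub2 : g (m+2) - h (m+2) ≠ 0 := by
    rw [hfac]; exact mul_ne_zero hg hs2ne
  have hd2 : (g (m+2) - h (m+2)).natDegree = a + b := by
    rw [hfac, natDegree_mul hg hs2ne, hs2]
  have hg3 : g (m+3) ≠ 0 := by rw [show m+3 = (m+1)+2 from rfl, g_succ]; exact pow_ne_zero _ hh2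
  have hh3 : h (m+3) ≠ 0 := by rw [show m+3 = (m+1)+2 from rfl, h_succ]; exact pow_ne_zero _ hsub2
  have hdg3 : (g (m+3)).natDegree = 4 * b := by
    rw [show m+3 = (m+1)+2 from rfl, g_succ, natDegree_pow, hdh2]; ring
  have hdh3 : (h (m+3)).natDegree = 2 * (a + b) := by
    rw [show m+3 = (m+1)+2 from rfl, h_succ, natDegree_pow, hd2]
  have hlt3 : (h (m+3)).natDegree < (g (m+3)).natDegree := by
    rw [hdg3, hdh3]; omega
  have hsub3 : g (m+3) - h (m+3) ≠ 0 := by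
    intro hz; rw [sub_eq_zero] at hz
    rw [hz] at hlt3; exact lt_irrefl _ hlt3
  have hd3 : (g (m+3) - h (m+3)).natDegree = 4 * b :=
    (natDegree_sub_eq_left_of_natDegree_lt hlt3).trans hdg3
  have hg4 : g (m+4) ≠ 0 := by rw [show m+4 = (m+2)+2 from rfl, g_succ]; exact pow_ne_zero _ hh3
  have hh4 : h (m+4) ≠ 0 := by rw [show m+4 = (m+2)+2 from rfl, h_succ]; exact pow_ne_zero _ hsub3
  have hdg4 : (g (m+4)).natDegree = 4 * (a + b) := by
    rw [show m+4 = (m+2)+2 from rfl, g_succ, natDegree_pow, hdh3]; ring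
  have hdh4 : (h (m+4)).natDegree = 8 * b := by
    rw [show m+4 = (m+2)+2 from rfl, h_succ, natDegree_pow, hd3]; ring
  refine ⟨hg2, hh2, by rw [hdg2, hdh2], hg3, hh3, hlt3, hg4, hh4, by rw [hdg4, hdh4]; omega⟩

lemma inv (k : ℕ) : g (3*k+1) ≠ 0 ∧ h (3*k+1) ≠ 0 ∧
    (g (3*k+1)).natDegree < (h (3*k+1)).natDegree := by
  induction k with
  | zero =>
    have hg1 : g 1 = 1 := by simp [g, gh]
    have hh1 : h 1 = ((X : Polynomial ℚ) - C 1) ^ 2 := by simp [h, gh]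
    refine ⟨by rw [hg1]; exact one_ne_zero, ?_, ?_⟩
    · rw [hh1]; exact pow_ne_zero _ (X_sub_C_ne_zero 1)
    · rw [hg1, hh1, natDegree_pow, natDegree_X_sub_C, natDegree_one]; omega
  | succ k ih =>
    obtain ⟨hg, hh, hlt⟩ := ih
    obtain ⟨-, -, -, -, -, -, hg4, hh4, hlt4⟩ := key (3*k) hg hh hlt
    have heq : 3*(k+1)+1 = 3*k+4 := by ring
    rw [heq]
    exact ⟨hg4, hh4, hlt4⟩

/-- For all `n ≥ 1`: `deg gₙ < deg hₙ` if `n ≡ 1 (mod 3)`,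
`deg gₙ = deg hₙ` if `n ≡ 2 (mod 3)`, and `deg gₙ > deg hₙ` if `n ≡ 0 (mod 3)`. -/
theorem degree_comparison (n : ℕ) (hn : 1 ≤ n) :
    (n % 3 = 1 → (g n).natDegree < (h n).natDegree) ∧
    (n % 3 = 2 → (g n).natDegree = (h n).natDegree) ∧
    (n % 3 = 0 → (h n).natDegree < (g n).natDegree) := by
  refine ⟨fun hr => ?_, fun hr => ?_, fun hr => ?_⟩
  · obtain ⟨k, rfl⟩ : ∃ k, n = 3*k+1 := ⟨n/3, by omega⟩
    exact (inv k).2.2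
  · obtain ⟨k, rfl⟩ : ∃ k, n = 3*k+2 := ⟨n/3, by omega⟩
    obtain ⟨h1, h2, h3⟩ := inv k
    exact (key (3*k) h1 h2 h3).2.2.1
  · obtain ⟨k, rfl⟩ : ∃ k, n = 3*k+3 := ⟨n/3 - 1, by omega⟩
    obtain ⟨h1, h2, h3⟩ := inv k
    exact (key (3*k) h1 h2 h3).2.2.2.2.2.1
end

section
/- With g_n, h_n as in the recursion above over ℚ, the resultant Res(g_n, h_n) is, up to sign, a power of 2 for every n ≥ 1. -/
open Polynomial

/-- The Sylvester matrix of two polynomials. -/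
noncomputable def sylvester {F : Type*} [Field F] (p q : Polynomial F) :
    Matrix (Fin (q.natDegree + p.natDegree)) (Fin (q.natDegree + p.natDegree)) F :=
  fun i j =>
    if (i : ℕ) < q.natDegree then
      (if (i : ℕ) ≤ (j : ℕ) then p.coeff ((j : ℕ) - (i : ℕ)) else 0)
    else
      (if (i : ℕ) - q.natDegree ≤ (j : ℕ) then q.coeff ((j : ℕ) - ((i : ℕ) - q.natDegree)) else 0)

/-- The resultant of two polynomials, as the determinant of their Sylvester matrix. -/
noncomputable def res {F : Type*} [Field F] (p q : Polynomial F) : F :=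
  (_root_.sylvester p q).det

/-!
The pair `(gₙ, hₙ)` is the `n`-th iterate of `(a, b) ↦ (b², (a - b)²)` on `(X, 1)`, a recursion
that already makes sense over `ℤ`. Over any commutative ring this step preserves coprimality (a
Bézout relation for `a, b` gives one for `b, a - b`, hence for their squares), and the leading
terms cycle through three shapes in each of which one of the two polynomials is monic. Over `ℤ`
the resultant of two coprime polynomials one of which is monic is a unit, so
`Res(gₙ, hₙ) = ±1 = ±2⁰`.
-/

theorem res_eq_resultant {F : Type*} [Field F] (p q : F[X]) : res p q = resultant q p := by
  rw [res, resultant, ← Matrix.det_transpose]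
  -- Entry by entry; the two matrices differ only in when a coefficient index exceeds the degree.
  congr 1
  ext i j
  induction j using Fin.addCases with
  | left j =>
    have := j.isLt
    simp only [_root_.sylvester, Polynomial.sylvester, Matrix.transpose_apply, Matrix.of_apply,
      Fin.addCases_left, Fin.val_castAdd, Set.mem_Icc]
    split_ifs <;> first | rfl | omega | exact coeff_eq_zero_of_natDegree_lt (by omega)
  | right j =>
    simp only [_root_.sylvester, Polynomial.sylvester, Matrix.transpose_apply, Matrix.of_apply,
      Fin.addCases_right, Fin.val_natAdd, Set.mem_Icc, Nat.add_sub_cancel_left]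
    split_ifs <;> first | rfl | omega | exact coeff_eq_zero_of_natDegree_lt (by omega)

theorem isUnit_resultant_of_isCoprime {R : Type*} [CommRing R] {p q : R[X]}
    (hmonic : p.Monic ∨ q.Monic) (hpq : IsCoprime p q) : IsUnit (resultant p q) := by
  rcases hmonic with hp | hq
  · exact (isUnit_resultant_iff_isCoprime hp).mpr hpq
  · rw [resultant_comm]
    exact ((isUnit_neg_one (α := R)).pow _).mul
      ((isUnit_resultant_iff_isCoprime hq).mpr hpq.symm)

theorem resultant_map_of_injective {R S : Type*} [CommRing R] [CommRing S] {φ : R →+* S}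
    (hφ : Function.Injective φ) (p q : R[X]) :
    resultant (p.map φ) (q.map φ) = φ (resultant p q) := by
  rw [natDegree_map_eq_of_injective hφ, natDegree_map_eq_of_injective hφ, resultant_map_map]

section NextPair

variable {A : Type*} [CommRing A]

/-- For `f(x) = 1/(x-1)²` one has `f(a/b) = b²/(a-b)²`. -/
def nextPair (p : A × A) : A × A := (p.2 ^ 2, (p.1 - p.2) ^ 2)

theorem isCoprime_nextPair {p : A × A} (hp : IsCoprime p.1 p.2) :
    IsCoprime (nextPair p).1 (nextPair p).2 := by
  have : IsCoprime p.2 (p.1 - p.2) := by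
    simpa [sub_eq_add_neg] using (hp.symm.add_mul_left_right (-1))
  exact this.pow

theorem isCoprime_iterate_nextPair {p : A × A} (hp : IsCoprime p.1 p.2) (n : ℕ) :
    IsCoprime (nextPair^[n] p).1 (nextPair^[n] p).2 :=
  Function.Iterate.rec (fun q : A × A ↦ IsCoprime q.1 q.2) hp (fun _ ↦ isCoprime_nextPair) n

theorem semiconj_prodMap_nextPair {B : Type*} [CommRing B] (φ : A →+* B) :
    Function.Semiconj (Prod.map φ φ) nextPair nextPair := fun _ ↦ by
  simp [nextPair]

end NextPair

theorem prodMap_map_iterate_nextPair {R S : Type*} [CommRing R] [CommRing S] (φ : R →+* S)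
    (n : ℕ) : Prod.map (map φ) (map φ) (nextPair^[n] (X, 1)) = nextPair^[n] (X, 1) := by
  rw [← coe_mapRingHom, (semiconj_prodMap_nextPair _).iterate_right]
  simp

section MonicShape

variable {R : Type*} [CommRing R]

/-- Starting from `(X, 1)`, `nextPair` cycles through the shapes `fst → snd → both → fst`. -/
inductive MonicShape (p : R[X] × R[X]) : Prop
  | fst (h₁ : p.1.Monic) (hlt : p.2.natDegree < p.1.natDegree)
  | snd (h₂ : p.2.Monic) (hlt : p.1.natDegree < p.2.natDegree)
  | both (h₁ : p.1.Monic) (h₂ : p.2.Monic) (hlt : (p.1 - p.2).natDegree < p.2.natDegree)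

theorem MonicShape.monic_or_monic {p : R[X] × R[X]} (hp : MonicShape p) :
    p.1.Monic ∨ p.2.Monic := by
  cases hp with
  | fst h₁ => exact .inl h₁
  | snd h₂ => exact .inr h₂
  | both h₁ => exact .inl h₁

theorem monicShape_nextPair {p : R[X] × R[X]} (hp : MonicShape p) : MonicShape (nextPair p) := by
  obtain ⟨a, b⟩ := p
  simp only [nextPair]
  cases hp with
  | fst ha hlt =>
    dsimp only at ha hlt
    have hab : (a - b).Monic := ha.sub_of_left (degree_lt_degree hlt)
    refine .snd (hab.pow 2) ?_
    calc (b ^ 2).natDegree ≤ 2 * b.natDegree := natDegree_pow_le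
      _ < 2 * (a - b).natDegree := by rw [natDegree_sub_eq_left_of_natDegree_lt hlt]; omega
      _ = ((a - b) ^ 2).natDegree := (hab.natDegree_pow 2).symm
  | snd hb hlt =>
    dsimp only at hb hlt
    have hba : (b - a).Monic := hb.sub_of_left (degree_lt_degree hlt)
    have hsq : (a - b) ^ 2 = (b - a) ^ 2 := by ring
    refine .both (hb.pow 2) (by rw [hsq]; exact hba.pow 2) ?_
    have hdiff : b ^ 2 - (a - b) ^ 2 = a * (2 * b - a) := by ring
    have h2b : (2 * b).natDegree ≤ b.natDegree :=
      natDegree_mul_le.trans (by rw [natDegree_ofNat, zero_add])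
    have h2ba : (2 * b - a).natDegree ≤ b.natDegree :=
      (natDegree_sub_le_of_le h2b hlt.le).trans_eq (max_self _)
    calc (b ^ 2 - (a - b) ^ 2).natDegree = (a * (2 * b - a)).natDegree := by rw [hdiff]
      _ ≤ a.natDegree + b.natDegree := natDegree_mul_le.trans (by omega)
      _ < 2 * (b - a).natDegree := by rw [natDegree_sub_eq_left_of_natDegree_lt hlt]; omega
      _ = ((a - b) ^ 2).natDegree := by rw [hsq, hba.natDegree_pow]
  | both _ hb hlt =>
    dsimp only at hb hlt
    refine .fst (hb.pow 2) ?_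
    calc ((a - b) ^ 2).natDegree ≤ 2 * (a - b).natDegree := natDegree_pow_le
      _ < 2 * b.natDegree := by omega
      _ = (b ^ 2).natDegree := (hb.natDegree_pow 2).symm

theorem monicShape_iterate_nextPair {p : R[X] × R[X]} (hp : MonicShape p) (n : ℕ) :
    MonicShape (nextPair^[n] p) :=
  Function.Iterate.rec MonicShape hp (fun _ ↦ monicShape_nextPair) n

end MonicShape

theorem gh_succ {n : ℕ} (hn : 1 ≤ n) : gh (n + 1) = nextPair (gh n) := by
  obtain ⟨k, rfl⟩ := Nat.exists_eq_add_of_le' hn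
  rfl

theorem gh_eq_iterate_nextPair {n : ℕ} (hn : 1 ≤ n) : gh n = nextPair^[n] (X, 1) := by
  induction n, hn using Nat.le_induction with
  | base => simp [gh, nextPair]
  | succ k hk ih => rw [gh_succ hk, ih, Function.iterate_succ_apply']

/-- For every `n ≥ 1`, the resultant `Res(gₙ, hₙ)` is, up to sign,
a power of `2`. -/
theorem resultant_pow_two (n : ℕ) (hn : 1 ≤ n) :
    ∃ m : ℕ, res (g n) (h n) = 2 ^ m ∨ res (g n) (h n) = -(2 ^ m) := by
  let p : ℤ[X] × ℤ[X] := nextPair^[n] (X, 1)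
  have hgh : gh n = Prod.map (map (Int.castRingHom ℚ)) (map (Int.castRingHom ℚ)) p := by
    rw [gh_eq_iterate_nextPair hn, prodMap_map_iterate_nextPair]
  have hshape : MonicShape p := monicShape_iterate_nextPair (.fst monic_X (by simp)) n
  have hcop : IsCoprime p.1 p.2 := isCoprime_iterate_nextPair isCoprime_one_right n
  have hres : res (g n) (h n) = resultant p.2 p.1 := by
    rw [res_eq_resultant, g, h, hgh]
    exact resultant_map_of_injective Int.cast_injective _ _
  refine ⟨0, ?_⟩
  obtain hu | hu := Int.isUnit_iff.mp
    (isUnit_resultant_of_isCoprime hshape.monic_or_monic.symm hcop.symm)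
  · exact .inl (by rw [hres, hu]; norm_num)
  · exact .inr (by rw [hres, hu]; norm_num)
end

section
/- For each i ∈ {1,2,3}, the closed subgroup of Aut(T) generated by a_i is isomorphic to ℤ_2, the group of 2-adic integers. -/
/-!
For any tree automorphism `x`, the power `x ^ 2 ^ n` acts trivially on the first `n` levels:
squaring an automorphism that is trivial on the first `n` levels makes it trivial on level
`n + 1` as well. So on the first `n` levels `x ^ a` only depends on `a` modulo `2 ^ n`, and
`a ↦ x ^ a` extends to a continuous homomorphism `ℤ₂ → Aut(T)`. Its image is compact, hence
closed, and contains `⟨x⟩` densely, so it is the closure of `⟨x⟩`. Its kernel is a closed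
subgroup of `ℤ₂`, hence an ideal; a nonzero one contains some `2 ^ m`, so the map is injective
once `x` has infinite order.

The `aᵢ` have infinite order: restricting to subtrees, `a₁ ^ N = 1` gives `a₃ ^ N = 1`; as
`a₃` swaps the root, `N = 2M` and `a₂ ^ M = 1`; likewise `M = 2L` and `a₁ ^ L = 1`. Descent
on `N`.
-/

namespace TreeAut

instance : TopologicalSpace Port := inferInstanceAs (TopologicalSpace (List Bool → Bool))

section TopologyLemmas

variable {X : Type*} [TopologicalSpace X]

lemma continuous_bcond {f g h : X → Bool} (hf : Continuous f) (hg : Continuous g)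
    (hh : Continuous h) : Continuous fun x => cond (f x) (g x) (h x) := by
  have heq : (fun x => cond (f x) (g x) (h x)) = fun x => if f x = true then g x else h x := by
    funext x; cases hx : f x <;> simp
  rw [heq]
  refine Continuous.if ?_ hg hh
  have hclopen : IsClopen {x | f x = true} :=
    ⟨(isClosed_discrete {true}).preimage hf, (isOpen_discrete {true}).preimage hf⟩
  intro a ha
  rw [hclopen.frontier_eq] at ha
  exact absurd ha (Set.notMem_empty a)

lemma continuous_bnot {f : X → Bool} (hf : Continuous f) : Continuous fun x => !(f x) := by
  have heq : (fun x => !(f x)) = fun x => cond (f x) false true := by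
    funext x; cases f x <;> rfl
  rw [heq]
  exact continuous_bcond hf continuous_const continuous_const

lemma continuous_bxor {f g : X → Bool} (hf : Continuous f) (hg : Continuous g) :
    Continuous fun x => xor (f x) (g x) := by
  have heq : (fun x => xor (f x) (g x)) = fun x => cond (f x) (!(g x)) (g x) := by
    funext x; cases f x <;> cases g x <;> rfl
  rw [heq]
  exact continuous_bcond hf (continuous_bnot hg) hg

end TopologyLemmas

lemma continuous_sub_comp {X : Type*} [TopologicalSpace X] {f : X → Port} (b : Bool)
    (hf : Continuous f) : Continuous fun x => sub (f x) b := by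
  refine continuous_pi fun s => ?_
  exact (continuous_apply (b :: s)).comp hf

lemma continuous_eval_act :
    ∀ s : List Bool, Continuous fun pq : Port × Port => pq.2 (act pq.1 s) := by
  intro s
  induction s with
  | nil => exact (continuous_apply ([] : List Bool)).comp continuous_snd
  | cons b l ih =>
      have key : (fun pq : Port × Port => pq.2 (act pq.1 (b :: l)))
          = fun pq => cond (xor b (pq.1 []))
              ((fun pq' : Port × Port => pq'.2 (act pq'.1 l)) (sub pq.1 b, sub pq.2 true))
              ((fun pq' : Port × Port => pq'.2 (act pq'.1 l)) (sub pq.1 b, sub pq.2 false)) := by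
        funext pq
        rw [act_cons]
        cases hx : xor b (pq.1 []) <;> rfl
      rw [key]
      have hc : Continuous fun pq : Port × Port => xor b (pq.1 []) :=
        continuous_bxor continuous_const ((continuous_apply ([] : List Bool)).comp continuous_fst)
      refine continuous_bcond hc ?_ ?_ <;>
        exact ih.comp (((continuous_sub_comp b continuous_fst).prodMk
          (continuous_sub_comp _ continuous_snd)))

lemma continuous_eval_inv :
    ∀ s : List Bool, Continuous fun p : Port => p (invAct p s) := by
  intro s
  induction s with
  | nil => exact continuous_apply ([] : List Bool)
  | cons b l ih =>
      have key : (fun p : Port => p (invAct p (b :: l)))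
          = fun p => cond (xor b (p []))
              ((fun q : Port => q (invAct q l)) (sub p true))
              ((fun q : Port => q (invAct q l)) (sub p false)) := by
        funext p
        rw [invAct_cons]
        have : ∀ c : Bool, p (c :: invAct (sub p c) l) = (sub p c) (invAct (sub p c) l) :=
          fun c => rfl
        cases hx : xor b (p []) <;> simp only [hx] <;> exact this _
      rw [key]
      have hc : Continuous fun p : Port => xor b (p []) :=
        continuous_bxor continuous_const (continuous_apply ([] : List Bool))
      exact continuous_bcond hc (ih.comp (continuous_sub_comp true continuous_id))
        (ih.comp (continuous_sub_comp false continuous_id))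

instance : IsTopologicalGroup Port where
  continuous_mul := by
    refine continuous_pi fun s => ?_
    exact continuous_bxor ((continuous_apply s).comp continuous_fst) (continuous_eval_act s)
  continuous_inv := by
    refine continuous_pi fun s => ?_
    exact continuous_eval_inv s

end TreeAut

open PadicInt

section PadicClosure

variable {p : ℕ} [Fact p.Prime] {G : Type*} [Group G] [TopologicalSpace G]

lemma PadicInt.continuous_toZModPow (n : ℕ) :
    Continuous (toZModPow n : ℤ_[p] → ZMod (p ^ n)) := by
  refine continuous_of_continuousAt_zero (toZModPow n) ?_
  rw [ContinuousAt, nhds_discrete (ZMod (p ^ n)), map_zero, Filter.tendsto_pure]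
  have hp : (0 : ℝ) < p := by exact_mod_cast (Fact.out : p.Prime).pos
  filter_upwards [Metric.closedBall_mem_nhds (0 : ℤ_[p]) (zpow_pos hp (-n : ℤ))] with z hz
  rw [← RingHom.mem_ker, ker_toZModPow, ← norm_le_pow_iff_mem_span_pow]
  simpa using hz

lemma PadicInt.range_subset_of_isClosed {f : Multiplicative ℤ_[p] →* G} (hf : Continuous f)
    {S : Set G} (hS : IsClosed S) (hpow : ∀ k : ℤ, f (.ofAdd 1) ^ k ∈ S) :
    Set.range f ⊆ S := by
  rintro _ ⟨z, rfl⟩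
  refine denseRange_intCast.induction_on (p := fun w : ℤ_[p] => f (.ofAdd w) ∈ S) z.toAdd
    (hS.preimage (hf.comp continuous_ofAdd)) fun k => ?_
  simpa only [← zsmul_one, ofAdd_zsmul, map_zpow] using hpow k

lemma PadicInt.injective_of_not_isOfFinOrder [T1Space G] {f : Multiplicative ℤ_[p] →* G}
    (hf : Continuous f) (hx : ¬IsOfFinOrder (f (.ofAdd 1))) : Function.Injective f := by
  refine (injective_iff_map_eq_one f).mpr fun z hz => ?_
  by_contra hz1
  have hz0 : z.toAdd ≠ 0 := hz1
  -- The kernel of `f` is a closed subgroup, hence an ideal: it contains every multiple of `z`.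
  let g : Multiplicative ℤ_[p] →* G := f.comp (AddMonoidHom.mulRight z.toAdd).toMultiplicative
  have hg_cont : Continuous g :=
    hf.comp (continuous_ofAdd.comp ((continuous_mul_const z.toAdd).comp continuous_toAdd))
  have hg : Set.range g ⊆ {1} :=
    range_subset_of_isClosed hg_cont isClosed_singleton fun k => by
      change f (.ofAdd (1 * z.toAdd)) ^ k = 1
      rw [one_mul, ofAdd_toAdd, hz, one_zpow]
  have hpow : f (.ofAdd 1) ^ (p ^ z.toAdd.valuation) = 1 := by
    have hz_eq := unitCoeff_spec hz0
    set u := unitCoeff hz0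
    have h := hg ⟨.ofAdd ↑u⁻¹, rfl⟩
    change f (.ofAdd (↑u⁻¹ * z.toAdd)) = 1 at h
    rw [hz_eq, Units.inv_mul_cancel_left] at h
    rwa [← map_pow, ← ofAdd_nsmul, nsmul_one, Nat.cast_pow]
  exact hx (isOfFinOrder_iff_pow_eq_one.mpr ⟨_, pow_pos (Fact.out : p.Prime).pos _, hpow⟩)

theorem PadicInt.nonempty_closure_mulEquiv [IsTopologicalGroup G] [T2Space G]
    {f : Multiplicative ℤ_[p] →* G} (hf : Continuous f) (hx : ¬IsOfFinOrder (f (.ofAdd 1))) :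
    Nonempty
      ((Subgroup.closure {f (.ofAdd 1)}).topologicalClosure ≃* Multiplicative ℤ_[p]) := by
  have hrange : f.range = (Subgroup.closure {f (.ofAdd 1)}).topologicalClosure := by
    refine le_antisymm (fun _ hy => ?_) (Subgroup.topologicalClosure_minimal _ ?_ ?_)
    · refine range_subset_of_isClosed hf (Subgroup.isClosed_topologicalClosure _)
        (fun k => ?_) hy
      exact Subgroup.le_topologicalClosure _
        (Subgroup.zpow_mem _ (Subgroup.subset_closure (Set.mem_singleton _)) k)
    · exact (Subgroup.closure_le _).mpr
        (Set.singleton_subset_iff.mpr (MonoidHom.mem_range.mpr ⟨_, rfl⟩))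
    · have : CompactSpace (Multiplicative ℤ_[p]) := inferInstanceAs (CompactSpace ℤ_[p])
      exact (isCompact_range hf).isClosed
  exact ⟨((MonoidHom.ofInjective (injective_of_not_isOfFinOrder hf hx)).trans
    (MulEquiv.subgroupCongr hrange)).symm⟩

end PadicClosure

namespace TreeAut

instance : T2Space Port := inferInstanceAs (T2Space (List Bool → Bool))

lemma act_congr : ∀ (s : List Bool) {p q : Port},
    (∀ t : List Bool, t.length < s.length → p t = q t) → act p s = act q s
  | [], _, _, _ => rfl
  | b :: l, p, q, h => by
    rw [act_cons, act_cons, h [] (Nat.succ_pos _)]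
    exact congrArg _ (act_congr l fun t ht => h (b :: t) (Nat.succ_lt_succ ht))

lemma act_eq_self (s : List Bool) {p : Port}
    (h : ∀ t : List Bool, t.length < s.length → p t = false) : act p s = s := by
  rw [act_congr s (q := 1) h, act_one]

def levelCon (n : ℕ) : Con Port where
  r p q := ∀ s : List Bool, s.length < n → p s = q s
  iseqv := ⟨fun _ _ _ => rfl, fun h s hs => (h s hs).symm,
    fun h₁ h₂ s hs => (h₁ s hs).trans (h₂ s hs)⟩
  mul' {p p' q q'} hp hq s hs := by
    have hact : act p s = act p' s := act_congr s fun t ht => hp t (ht.trans hs)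
    rw [mul_apply, mul_apply, hp s hs, hact, hq _ (by rwa [act_length])]

lemma eq_of_forall_levelCon {p q : Port} (h : ∀ n, levelCon n p q) : p = q :=
  funext fun s => h (s.length + 1) s (Nat.lt_succ_self _)

lemma levelCon_succ_sq_one {n : ℕ} {p : Port} (hp : levelCon n p 1) :
    levelCon (n + 1) (p ^ 2) 1 := by
  intro s hs
  have hfix : act p s = s := act_eq_self s fun t ht => hp t (by omega)
  rw [pow_two, mul_apply, hfix, Bool.xor_self]
  rfl

lemma levelCon_pow_two_pow_one (x : Port) : ∀ n, levelCon n (x ^ 2 ^ n) 1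
  | 0 => fun _ hs => absurd hs (Nat.not_lt_zero _)
  | n + 1 => by
    rw [pow_succ, pow_mul]
    exact levelCon_succ_sq_one (levelCon_pow_two_pow_one x n)

lemma levelCon_pow_of_natCast_eq (x : Port) {n a b : ℕ}
    (h : (a : ZMod (2 ^ n)) = b) : levelCon n (x ^ a) (x ^ b) := by
  have hmod : ∀ c, levelCon n (x ^ c) (x ^ (c % 2 ^ n)) := fun c => by
    have := (levelCon n).mul ((levelCon n).pow (c / 2 ^ n) (levelCon_pow_two_pow_one x n))
      ((levelCon n).refl (x ^ (c % 2 ^ n)))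
    rwa [← pow_mul, ← pow_add, Nat.div_add_mod, one_pow, one_mul] at this
  rw [ZMod.natCast_eq_natCast_iff'] at h
  exact ((levelCon n).trans (hmod a) (h ▸ (levelCon n).symm (hmod b)))

noncomputable def padicPow (x : Port) (z : ℤ_[2]) : Port :=
  fun s => (x ^ (toZModPow (s.length + 1) z).val) s

lemma levelCon_padicPow (x : Port) (z : ℤ_[2]) (n : ℕ) :
    levelCon n (padicPow x z) (x ^ (toZModPow n z).val) := by
  intro s hs
  have h : ((toZModPow (s.length + 1) z).val : ZMod (2 ^ (s.length + 1)))
      = ((toZModPow n z).val : ZMod (2 ^ (s.length + 1))) := by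
    rw [ZMod.natCast_zmod_val, ← ZMod.cast_eq_val, cast_toZModPow _ _ hs]
  exact levelCon_pow_of_natCast_eq x h s (Nat.lt_succ_self _)

lemma padicPow_add (x : Port) (z w : ℤ_[2]) :
    padicPow x (z + w) = padicPow x z * padicPow x w := by
  refine eq_of_forall_levelCon fun n => ?_
  have h : ((toZModPow n (z + w)).val : ZMod (2 ^ n))
      = ((toZModPow n z).val + (toZModPow n w).val : ℕ) := by
    simp only [Nat.cast_add, ZMod.natCast_zmod_val, map_add]
  refine (levelCon n).trans (levelCon_padicPow x _ n) ((levelCon n).trans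
    (levelCon_pow_of_natCast_eq x h) ?_)
  rw [pow_add]
  exact (levelCon n).mul ((levelCon n).symm (levelCon_padicPow x z n))
    ((levelCon n).symm (levelCon_padicPow x w n))

lemma padicPow_one (x : Port) : padicPow x 1 = x := by
  refine eq_of_forall_levelCon fun n => (levelCon n).trans (levelCon_padicPow x 1 n) ?_
  have h : ((toZModPow n (1 : ℤ_[2])).val : ZMod (2 ^ n)) = ((1 : ℕ) : ZMod (2 ^ n)) := by
    rw [ZMod.natCast_zmod_val, map_one, Nat.cast_one]
  simpa only [pow_one] using levelCon_pow_of_natCast_eq x h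

lemma continuous_padicPow (x : Port) : Continuous (padicPow x) :=
  continuous_pi fun s =>
    (continuous_of_discreteTopology
      (f := fun a : ZMod (2 ^ (s.length + 1)) => (x ^ a.val) s)).comp (continuous_toZModPow _)

noncomputable def padicPowHom (x : Port) : Multiplicative ℤ_[2] →* Port :=
  MonoidHom.mk' (fun z => padicPow x z.toAdd) fun z w => padicPow_add x z.toAdd w.toAdd

lemma nonempty_closure_mulEquiv_padicInt {x : Port} (hx : ¬IsOfFinOrder x) :
    Nonempty ((Subgroup.closure {x}).topologicalClosure ≃* Multiplicative ℤ_[2]) := by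
  have hone : padicPowHom x (.ofAdd 1) = x := padicPow_one x
  rw [← hone] at hx ⊢
  exact PadicInt.nonempty_closure_mulEquiv
    ((continuous_padicPow x).comp continuous_toAdd) hx

lemma pow_nil_of_nil_eq_false {p : Port} (h : p [] = false) : ∀ N, (p ^ N) [] = false
  | 0 => rfl
  | N + 1 => by rw [pow_succ, mul_apply, act_nil, pow_nil_of_nil_eq_false h N, h]; rfl

lemma sub_pow_of_nil_eq_false {p : Port} (h : p [] = false) (b : Bool) :
    ∀ N, sub (p ^ N) b = sub p b ^ N
  | 0 => rfl
  | N + 1 => by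
    rw [pow_succ, sub_mul, pow_nil_of_nil_eq_false h N, Bool.xor_false,
      sub_pow_of_nil_eq_false h b N, pow_succ]

lemma sq_nil (p : Port) : (p ^ 2) [] = false := by
  rw [pow_two, mul_apply, act_nil, Bool.xor_self]

lemma sub_pow_two_mul {p : Port} (h : p [] = true) (b : Bool) (M : ℕ) :
    sub (p ^ (2 * M)) b = (sub p b * sub p (!b)) ^ M := by
  rw [pow_mul, sub_pow_of_nil_eq_false (sq_nil p) b M, pow_two, sub_mul, h, Bool.xor_true]

lemma even_of_pow_eq_one {p : Port} (h : p [] = true) {N : ℕ} (hN : p ^ N = 1) : Even N := by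
  by_contra hodd
  obtain ⟨M, rfl⟩ := Nat.not_even_iff_odd.mp hodd
  have hnil := congrFun hN []
  rw [pow_succ, mul_apply, act_nil, h, pow_mul, pow_nil_of_nil_eq_false (sq_nil p)] at hnil
  exact Bool.noConfusion hnil

lemma a3_pow_eq_one_of_a1 {N : ℕ} (h : a1 ^ N = 1) : a3 ^ N = 1 := by
  have h' : sub (a1 ^ N) true = sub 1 true := congrArg (sub · true) h
  rwa [sub_pow_of_nil_eq_false (p := a1) rfl] at h'

lemma exists_a2_pow_eq_one_of_a3 {N : ℕ} (h : a3 ^ N = 1) : ∃ M, N = 2 * M ∧ a2 ^ M = 1 := by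
  obtain ⟨M, rfl⟩ := even_of_pow_eq_one rfl h
  rw [← two_mul] at h
  refine ⟨M, (two_mul M).symm, ?_⟩
  have h' : sub (a3 ^ (2 * M)) false = sub 1 false := congrArg (sub · false) h
  rw [sub_pow_two_mul (p := a3) rfl] at h'
  change (a2 * 1) ^ M = 1 at h'
  rwa [mul_one] at h'

lemma exists_a1_pow_eq_one_of_a2 {N : ℕ} (h : a2 ^ N = 1) : ∃ M, N = 2 * M ∧ a1 ^ M = 1 := by
  obtain ⟨M, rfl⟩ := even_of_pow_eq_one rfl h
  rw [← two_mul] at h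
  refine ⟨M, (two_mul M).symm, ?_⟩
  have h' : sub (a2 ^ (2 * M)) false = sub 1 false := congrArg (sub · false) h
  rw [sub_pow_two_mul (p := a2) rfl] at h'
  change (1 * a1) ^ M = 1 at h'
  rwa [one_mul] at h'

lemma eq_zero_of_a1_pow_eq_one : ∀ N, a1 ^ N = 1 → N = 0 := by
  intro N
  induction N using Nat.strong_induction_on with
  | _ N ih =>
    intro h
    obtain ⟨M, rfl, hM⟩ := exists_a2_pow_eq_one_of_a3 (a3_pow_eq_one_of_a1 h)
    obtain ⟨L, rfl, hL⟩ := exists_a1_pow_eq_one_of_a2 hM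
    obtain rfl | hL0 := L.eq_zero_or_pos
    · rfl
    · exact absurd (ih L (by omega) hL) hL0.ne'

lemma not_isOfFinOrder_a1 : ¬IsOfFinOrder a1 := fun h => by
  obtain ⟨N, hN, h1⟩ := isOfFinOrder_iff_pow_eq_one.mp h
  exact hN.ne' (eq_zero_of_a1_pow_eq_one N h1)

lemma not_isOfFinOrder_a2 : ¬IsOfFinOrder a2 := fun h => by
  obtain ⟨N, hN, h2⟩ := isOfFinOrder_iff_pow_eq_one.mp h
  obtain ⟨M, rfl, h1⟩ := exists_a1_pow_eq_one_of_a2 h2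
  exact not_isOfFinOrder_a1 (isOfFinOrder_iff_pow_eq_one.mpr ⟨M, by omega, h1⟩)

lemma not_isOfFinOrder_a3 : ¬IsOfFinOrder a3 := fun h => by
  obtain ⟨N, hN, h3⟩ := isOfFinOrder_iff_pow_eq_one.mp h
  obtain ⟨M, rfl, h2⟩ := exists_a2_pow_eq_one_of_a3 h3
  exact not_isOfFinOrder_a2 (isOfFinOrder_iff_pow_eq_one.mpr ⟨M, by omega, h2⟩)

/-- For each `i ∈ {1,2,3}`, the closed subgroup of `Aut(T)` generated
by `aᵢ` is isomorphic to `ℤ₂`, the (additive) group of 2-adic integers. -/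
theorem closure_generator_iso_padicInt :
    Nonempty ((Subgroup.closure {a1}).topologicalClosure ≃* Multiplicative ℤ_[2]) ∧
    Nonempty ((Subgroup.closure {a2}).topologicalClosure ≃* Multiplicative ℤ_[2]) ∧
    Nonempty ((Subgroup.closure {a3}).topologicalClosure ≃* Multiplicative ℤ_[2]) :=
  ⟨nonempty_closure_mulEquiv_padicInt not_isOfFinOrder_a1,
    nonempty_closure_mulEquiv_padicInt not_isOfFinOrder_a2,
    nonempty_closure_mulEquiv_padicInt not_isOfFinOrder_a3⟩

end TreeAut
end

section
/- With e_n = 2^n - 1 - ∑_{m=0}^{n-1} 2^{n-1-m}⌊m/2⌋ and |W_n| = 2^{2^n - 1} the order of Aut(T_n), the limit of e_n/(2^n - 1) as n → ∞ equals 2/3. -/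
/-- `eₙ = 2ⁿ - 1 - ∑_{m=0}^{n-1} 2^{n-1-m} ⌊m/2⌋`, the conjectural value of
`log₂ |Gₙ|`. -/
def e (n : ℕ) : ℤ := 2 ^ n - 1 - ∑ m ∈ Finset.range n, 2 ^ (n - 1 - m) * ((m : ℤ) / 2)

lemma e_succ (n : ℕ) : e (n + 1) = 2 * e n + 1 - (n : ℤ) / 2 := by
  unfold e
  rw [Finset.sum_range_succ]
  have h1 : ∀ m ∈ Finset.range n, (2:ℤ) ^ (n + 1 - 1 - m) * ((m : ℤ) / 2)
      = 2 * (2 ^ (n - 1 - m) * ((m : ℤ) / 2)) := by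
    intro m hm
    rw [Finset.mem_range] at hm
    have : n + 1 - 1 - m = (n - 1 - m) + 1 := by omega
    rw [this, pow_succ]; ring
  rw [Finset.sum_congr rfl h1, ← Finset.mul_sum]
  have : n + 1 - 1 - n = 0 := by omega
  rw [this]
  push_cast
  ring

lemma six_e (n : ℕ) : 6 * e n = 2 ^ (n + 2) + 3 * n - 4 - (n % 2 : ℕ) := by
  induction n with
  | zero => simp [e]
  | succ n ih =>
    rw [e_succ]
    have h2 : ((n % 2 : ℕ) : ℤ) = (n : ℤ) % 2 := Int.natCast_mod n 2
    have hdiv : ((n : ℤ) / 2) * 2 = n - (n % 2 : ℕ) := by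
      have h1 := Int.mul_ediv_add_emod (n : ℤ) 2
      omega
    have hmod : ((n + 1) % 2 : ℕ) = 1 - (n % 2 : ℕ) := by omega
    have hle : (n % 2 : ℕ) ≤ 1 := by omega
    rw [hmod, Nat.cast_sub hle]
    push_cast
    rw [pow_succ]
    linear_combination 2 * ih - 3 * hdiv + h2

open Filter

/-- Since `log₂ |Wₙ| = 2ⁿ - 1`, the Hausdorff dimension
`lim_n eₙ / (2ⁿ - 1)` equals `2/3`. -/
theorem hausdorff_dimension_two_thirds :
    Filter.Tendsto (fun n : ℕ => (e n : ℝ) / (2 ^ n - 1)) Filter.atTop (nhds (2 / 3)) := by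
  have key : ∀ n : ℕ, (6 : ℝ) * (e n : ℝ) = 2 ^ (n + 2) + 3 * n - 4 - (n % 2 : ℕ) := by
    intro n
    have h := six_e n
    set r := n % 2 with hr
    exact_mod_cast congrArg (fun z : ℤ => (z : ℝ)) h
  set t : ℕ → ℝ := fun n => (3 * (n : ℝ) - (n % 2 : ℕ)) / (6 * (2 ^ n - 1)) with ht
  have h0 : Tendsto t atTop (nhds 0) := by
    apply squeeze_zero' (g := fun n : ℕ => (n : ℝ) * (1 / 2) ^ n)
    · filter_upwards [eventually_ge_atTop 1] with n hn
      apply div_nonneg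
      · have : ((n % 2 : ℕ) : ℝ) ≤ 1 := by
          have : n % 2 ≤ 1 := by omega
          exact_mod_cast this
        have : (1 : ℝ) ≤ n := by exact_mod_cast hn
        linarith
      · have : (2 : ℝ) ≤ 2 ^ n := by
          calc (2:ℝ) = 2 ^ 1 := by norm_num
          _ ≤ 2 ^ n := by exact pow_le_pow_right₀ (by norm_num) hn
        linarith
    · filter_upwards [eventually_ge_atTop 1] with n hn
      have h2n : (2 : ℝ) ≤ 2 ^ n := by
        calc (2:ℝ) = 2 ^ 1 := by norm_num
        _ ≤ 2 ^ n := by exact pow_le_pow_right₀ (by norm_num) hn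
      have heq : (n : ℝ) * (1 / 2) ^ n = 3 * n / (3 * 2 ^ n) := by
        rw [div_pow]
        field_simp
        ring
      rw [heq]
      apply div_le_div₀
      · positivity
      · have : (0:ℝ) ≤ ((n % 2 : ℕ) : ℝ) := by positivity
        linarith
      · positivity
      · linarith
    · exact tendsto_self_mul_const_pow_of_lt_one (by norm_num) (by norm_num)
  have hcongr : ∀ᶠ n in atTop, (2 / 3 : ℝ) + t n = (e n : ℝ) / (2 ^ n - 1) := by
    filter_upwards [eventually_ge_atTop 1] with n hn
    have h2n : (2 : ℝ) ≤ 2 ^ n := by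
      calc (2:ℝ) = 2 ^ 1 := by norm_num
      _ ≤ 2 ^ n := by exact pow_le_pow_right₀ (by norm_num) hn
    have hne : (2 : ℝ) ^ n - 1 ≠ 0 := by linarith
    have he : (e n : ℝ) = (2 ^ (n + 2) + 3 * n - 4 - (n % 2 : ℕ)) / 6 := by
      linarith [key n]
    rw [he, ht]
    field_simp
    ring
  have := (tendsto_const_nhds (x := (2/3 : ℝ)) (f := atTop)).add h0
  rw [add_zero] at this
  exact this.congr' hcongr
end
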